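/- For integers n ≥ 1 and 0 ≤ k ≤ n, the subtree of the Hamming tree T(n,k) rooted at a node (ℓ, b) with |b| = i has exactly C(n−i, ℓ) leaves, where C denotes the binomial coefficient. -/
import Mathlib


/-- One parent-to-child step in the Hamming tree `T(n,k)`: a node `(ℓ, b)` with
`0 < ℓ < n - |b|` has left child `(ℓ, 0b)` and right child `(ℓ-1, 1b)`. -/
def hammingStep (n : ℕ) (p q : ℕ × List Bool) : Prop :=
  (0 < p.1 ∧ p.1 < n - p.2.length) ∧
    (q = (p.1, false :: p.2) ∨ q = (p.1 - 1, true :: p.2))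

/-- `(ℓ, b)` is a node of the Hamming tree `T(n,k)`, i.e. it is reachable from the
root `(k, ε)` by parent-to-child steps. -/
def IsHammingNode (n k : ℕ) (p : ℕ × List Bool) : Prop :=
  Relation.ReflTransGen (hammingStep n) (k, []) p

/-- A node `(ℓ, b)` is a leaf when `ℓ = 0` or `ℓ = n - |b|`. -/
def IsHammingLeaf (n : ℕ) (p : ℕ × List Bool) : Prop :=
  p.1 = 0 ∨ p.1 = n - p.2.length

lemma reach_props {n : ℕ} {p q : ℕ × List Bool}
    (h : Relation.ReflTransGen (hammingStep n) p q) :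
    q.1 ≤ p.1 ∧ p.2 <:+ q.2 ∧ q.2.length ≤ max n p.2.length := by
  induction h with
  | refl => exact ⟨le_rfl, List.suffix_rfl, le_max_right _ _⟩
  | tail h1 h2 ih =>
    obtain ⟨⟨hpos, hlt⟩, hq⟩ := h2
    rename_i r q
    have hrlen : r.2.length < n := by omega
    rcases hq with rfl | rfl
    · exact ⟨ih.1, ih.2.1.trans (List.suffix_cons _ _), by simp; omega⟩
    · exact ⟨le_trans (Nat.sub_le _ _) ih.1, ih.2.1.trans (List.suffix_cons _ _),
        by simp; omega⟩

lemma leafset_finite (n ℓ : ℕ) (b : List Bool) :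
    {q : ℕ × List Bool |
      Relation.ReflTransGen (hammingStep n) (ℓ, b) q ∧ IsHammingLeaf n q}.Finite := by
  apply Set.Finite.subset ((Set.finite_Iic ℓ).prod (List.finite_length_le Bool (max n b.length)))
  rintro q ⟨hq, -⟩
  have := reach_props hq
  exact ⟨this.1, this.2.2⟩

lemma leafset_card (n : ℕ) : ∀ m ℓ : ℕ, ∀ b : List Bool, n - b.length = m → ℓ ≤ m →
    {q : ℕ × List Bool |
      Relation.ReflTransGen (hammingStep n) (ℓ, b) q ∧ IsHammingLeaf n q}.ncard =
    m.choose ℓ := by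
  intro m
  induction m with
  | zero =>
    intro ℓ b hm hℓ
    interval_cases ℓ
    have : {q : ℕ × List Bool |
        Relation.ReflTransGen (hammingStep n) (0, b) q ∧ IsHammingLeaf n q} = {(0, b)} := by
      ext q
      simp only [Set.mem_setOf_eq, Set.mem_singleton_iff]
      constructor
      · rintro ⟨hq, -⟩
        rcases (Relation.ReflTransGen.cases_head hq) with rfl | ⟨c, ⟨⟨h1, h2⟩, -⟩, -⟩
        · rfl
        · simp at h1
      · rintro rfl; exact ⟨Relation.ReflTransGen.refl, Or.inl rfl⟩
    rw [this]; simp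
  | succ m ih =>
    intro ℓ b hm hℓ
    by_cases hleaf : ℓ = 0 ∨ ℓ = n - b.length
    · -- leaf: no steps possible? ℓ=0 blocks, ℓ = n - len blocks since need ℓ < n - len
      have : {q : ℕ × List Bool |
          Relation.ReflTransGen (hammingStep n) (ℓ, b) q ∧ IsHammingLeaf n q} = {(ℓ, b)} := by
        ext q
        simp only [Set.mem_setOf_eq, Set.mem_singleton_iff]
        constructor
        · rintro ⟨hq, -⟩
          rcases (Relation.ReflTransGen.cases_head hq) with rfl | ⟨c, ⟨⟨h1, h2⟩, -⟩, -⟩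
          · rfl
          · simp at h1 h2; omega
        · rintro rfl; exact ⟨Relation.ReflTransGen.refl, hleaf⟩
      rw [this]
      rcases hleaf with rfl | h
      · simp
      · have : ℓ = m + 1 := by omega
        subst this
        simp [Nat.choose_self]
    · push_neg at hleaf
      have hℓ0 : 0 < ℓ := Nat.pos_of_ne_zero hleaf.1
      have hℓlt : ℓ < n - b.length := by omega
      have hblen : b.length < n := by omega
      have hstep0 : hammingStep n (ℓ, b) (ℓ, false :: b) := ⟨⟨hℓ0, hℓlt⟩, Or.inl rfl⟩
      have hstep1 : hammingStep n (ℓ, b) (ℓ - 1, true :: b) := ⟨⟨hℓ0, hℓlt⟩, Or.inr rfl⟩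
      have hsplit : {q : ℕ × List Bool |
          Relation.ReflTransGen (hammingStep n) (ℓ, b) q ∧ IsHammingLeaf n q} =
          {q | Relation.ReflTransGen (hammingStep n) (ℓ, false :: b) q ∧ IsHammingLeaf n q} ∪
          {q | Relation.ReflTransGen (hammingStep n) (ℓ - 1, true :: b) q ∧ IsHammingLeaf n q} := by
        ext q
        simp only [Set.mem_setOf_eq, Set.mem_union]
        constructor
        · rintro ⟨hq, hl⟩
          rcases Relation.ReflTransGen.cases_head hq with rfl | ⟨c, ⟨-, hc⟩, hq'⟩
          · exfalso; rcases hl with h | h <;> simp at h <;> omega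
          · rcases hc with rfl | rfl
            · exact Or.inl ⟨hq', hl⟩
            · exact Or.inr ⟨hq', hl⟩
        · rintro (⟨hq, hl⟩ | ⟨hq, hl⟩)
          · exact ⟨Relation.ReflTransGen.head hstep0 hq, hl⟩
          · exact ⟨Relation.ReflTransGen.head hstep1 hq, hl⟩
      have hdisj : Disjoint
          {q : ℕ × List Bool | Relation.ReflTransGen (hammingStep n) (ℓ, false :: b) q ∧ IsHammingLeaf n q}
          {q : ℕ × List Bool | Relation.ReflTransGen (hammingStep n) (ℓ - 1, true :: b) q ∧ IsHammingLeaf n q} := by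
        rw [Set.disjoint_left]
        rintro q ⟨hq0, -⟩ ⟨hq1, -⟩
        have h0 := (reach_props hq0).2.1
        have h1 := (reach_props hq1).2.1
        rcases List.suffix_or_suffix_of_suffix h0 h1 with h | h
        · have := List.IsSuffix.eq_of_length h (by simp)
          simp at this
        · have := List.IsSuffix.eq_of_length h (by simp)
          simp at this
      rw [hsplit, Set.ncard_union_eq hdisj (leafset_finite n _ _) (leafset_finite n _ _)]
      have hm' : n - (false :: b).length = m := by simp; omega
      have hm'' : n - (true :: b).length = m := by simp; omega
      rw [ih ℓ (false :: b) hm' (by omega), ih (ℓ - 1) (true :: b) hm'' (by omega)]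
      cases ℓ with
      | zero => omega
      | succ ℓ' =>
        simp only [Nat.succ_sub_one, Nat.succ_eq_add_one, Nat.choose_succ_succ]
        omega

/-- The subtree of the Hamming tree `T(n,k)` rooted at a node `(ℓ, b)` with `|b| = i`
has exactly `C(n-i, ℓ)` leaves. -/
theorem hammingTree_subtree_leaves_card (n k : ℕ) (hn : 1 ≤ n) (hk : k ≤ n)
    (ℓ i : ℕ) (b : List Bool) (hb : b.length = i)
    (h : IsHammingNode n k (ℓ, b)) :
    {q : ℕ × List Bool |
        Relation.ReflTransGen (hammingStep n) (ℓ, b) q ∧ IsHammingLeaf n q}.ncard =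
      (n - i).choose ℓ := by
  subst hb
  apply leafset_card n (n - b.length) ℓ b rfl
  -- need ℓ ≤ n - b.length: from IsHammingNode invariant
  clear hn
  have : ∀ p : ℕ × List Bool, Relation.ReflTransGen (hammingStep n) (k, []) p →
      p.1 ≤ n - p.2.length := by
    intro p hp
    induction hp with
    | refl => simpa
    | tail h1 h2 ih =>
      obtain ⟨⟨hpos, hlt⟩, hq⟩ := h2
      rcases hq with rfl | rfl <;> simp <;> omega
  exact this (ℓ, b) h
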